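/- Let β be an integer, c a positive integer, and f : ℝ → ℂ a Schwartz function. Then ∑_{n ∈ ℤ, n ≡ β (mod c)} f(n) = (1/c) ∑_{n ∈ ℤ} f̂(n/c) e(nβ/c), where f̂(y) = ∫_ℝ f(x) e(−xy) dx and e(x) = e^{2πix}. -/

import Mathlib

open Complex MeasureTheory
open scoped FourierTransform

lemma affine_temperate (b a : ℝ) : Function.HasTemperateGrowth (fun x : ℝ => b + a * x) := by
  apply Function.HasTemperateGrowth.of_fderiv (k := 1) (C := |b| + |a|)
  · have : (fderiv ℝ fun x : ℝ => b + a * x) = fun _ => a • (1 : ℝ →L[ℝ] ℝ) := by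
      funext x
      rw [fderiv_const_add]
      have : HasFDerivAt (fun x : ℝ => a * x) (a • (1 : ℝ →L[ℝ] ℝ)) x := by
        simpa [ContinuousLinearMap.one_def] using (hasFDerivAt_id x).const_mul a
      rw [this.fderiv]
    rw [this]
    exact Function.HasTemperateGrowth.const _
  · exact (differentiable_const _).add (differentiable_id.const_mul a)
  · intro x
    calc ‖b + a * x‖ ≤ |b| + |a| * |x| := by
          simpa [abs_mul] using abs_add_le b (a * x)
      _ ≤ (|b| + |a|) * (1 + ‖x‖) ^ 1 := by
          simp only [pow_one, Real.norm_eq_abs]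
          nlinarith [abs_nonneg b, abs_nonneg a, abs_nonneg x]

lemma fourier_affine (β : ℤ) (c : ℕ) (hc : 0 < c) (f : SchwartzMap ℝ ℂ) (n : ℤ) :
    𝓕 (fun x : ℝ => f ((β : ℝ) + (c : ℝ) * x)) (n : ℝ)
      = (1 / (c : ℂ)) *
          ((∫ x : ℝ, f x * Complex.exp (-(2 * Real.pi * Complex.I) * x * ((n : ℂ) / (c : ℂ))))
            * Complex.exp (2 * Real.pi * Complex.I * (n : ℂ) * (β : ℂ) / (c : ℂ))) := by
  have hc0 : (c : ℝ) ≠ 0 := Nat.cast_ne_zero.mpr hc.ne'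
  have hcC : (c : ℂ) ≠ 0 := Nat.cast_ne_zero.mpr hc.ne'
  set F : ℝ → ℂ := fun u => Complex.exp (↑(-2 * Real.pi * ((u - β) / c) * n) * Complex.I) • f u
    with hF
  rw [Real.fourier_real_eq_integral_exp_smul]
  have h1 : (∫ x : ℝ, Complex.exp (↑(-2 * Real.pi * x * n) * Complex.I) • f ((β : ℝ) + c * x))
      = ∫ x : ℝ, F ((β : ℝ) + (c : ℝ) * x) := by
    congr 1
    funext x
    rw [hF]
    simp only
    rw [show ((β : ℝ) + c * x - β) / c = x by field_simp; ring]
  rw [h1]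
  have h2 : (∫ x : ℝ, F ((β : ℝ) + (c : ℝ) * x))
      = |(c : ℝ)⁻¹| • ∫ y : ℝ, F ((β : ℝ) + y) :=
    MeasureTheory.Measure.integral_comp_mul_left (fun y => F ((β : ℝ) + y)) (c : ℝ)
  rw [h2, integral_add_left_eq_self F (β : ℝ)]
  have h3 : (∫ u : ℝ, F u)
      = (∫ x : ℝ, f x * Complex.exp (-(2 * Real.pi * Complex.I) * x * ((n : ℂ) / (c : ℂ))))
          * Complex.exp (2 * Real.pi * Complex.I * (n : ℂ) * (β : ℂ) / (c : ℂ)) := by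
    rw [← integral_mul_const]
    congr 1
    funext u
    rw [hF]
    simp only [smul_eq_mul]
    rw [mul_comm]
    conv_rhs => rw [mul_assoc, ← Complex.exp_add]
    congr 2
    push_cast
    field_simp
    ring
  rw [h3, _root_.abs_of_nonneg (by positivity : (0:ℝ) ≤ (c:ℝ)⁻¹)]
  simp only [smul_eq_mul, Complex.real_smul]
  push_cast
  ring

/-- Poisson summation over an arithmetic progression: for a Schwartz function `f`,
`∑_{n ≡ β (mod c)} f(n) = (1/c) ∑_{n ∈ ℤ} f̂(n/c) e(nβ/c)`, where
`f̂(y) = ∫ f(x) e(−xy) dx`. -/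
theorem stmt_13 (β : ℤ) (c : ℕ) (hc : 0 < c) (f : SchwartzMap ℝ ℂ) :
    ∑' n : ℤ, f ((β : ℝ) + (c : ℝ) * (n : ℝ))
      = (1 / (c : ℂ)) * ∑' n : ℤ,
          (∫ x : ℝ, f x * Complex.exp (-(2 * Real.pi * Complex.I) * x * ((n : ℂ) / (c : ℂ))))
            * Complex.exp (2 * Real.pi * Complex.I * (n : ℂ) * (β : ℂ) / (c : ℂ)) := by
  have hc0 : (c : ℝ) ≠ 0 := Nat.cast_ne_zero.mpr hc.ne'
  have hg_upper : ∃ (k : ℕ) (C : ℝ), ∀ x : ℝ, ‖x‖ ≤ C * (1 + ‖(β : ℝ) + (c : ℝ) * x‖) ^ k := by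
    refine ⟨1, (1 + |(β : ℝ)|) / c, fun x => ?_⟩
    have hc1 : (1:ℝ) ≤ c := by exact_mod_cast hc
    have h1 : (c:ℝ) * |x| ≤ |((β : ℝ) + c * x)| + |(β : ℝ)| := by
      calc (c:ℝ) * |x| = |((β : ℝ) + c * x) - β| := by
            rw [show ((β : ℝ) + c * x) - β = c * x from by ring, abs_mul,
              _root_.abs_of_pos (by positivity : (0:ℝ) < (c:ℝ))]
        _ ≤ |((β : ℝ) + c * x)| + |(β : ℝ)| := abs_sub _ _
    rw [Real.norm_eq_abs, Real.norm_eq_abs, pow_one, div_mul_eq_mul_div,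
      le_div_iff₀ (by positivity : (0:ℝ) < (c:ℝ))]
    nlinarith [abs_nonneg ((β : ℝ) + c * x), abs_nonneg ((β : ℝ)), abs_nonneg x]
  set g : SchwartzMap ℝ ℂ :=
    SchwartzMap.compCLM (𝕜 := ℝ) (affine_temperate (β : ℝ) (c : ℝ)) hg_upper f with hg
  have hgapp : ∀ x : ℝ, g x = f ((β : ℝ) + (c : ℝ) * x) := fun x => rfl
  have key := SchwartzMap.tsum_eq_tsum_fourier g 0
  simp only [zero_add, SchwartzMap.fourierTransformCLM_apply] at key
  have hLHS : ∑' n : ℤ, f ((β : ℝ) + (c : ℝ) * (n : ℝ)) = ∑' n : ℤ, g (n : ℝ) := by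
    exact tsum_congr fun n => (hgapp n).symm
  rw [hLHS, key, ← tsum_mul_left]
  refine tsum_congr fun n => ?_
  have : (𝓕 g) (n : ℝ) = 𝓕 (fun x : ℝ => f ((β : ℝ) + (c : ℝ) * x)) (n : ℝ) := rfl
  rw [this, fourier_affine β c hc f n]
  have hfn : (fourier n ((0 : ℝ) : UnitAddCircle)) = 1 := by
    simp [fourier_apply]
  rw [hfn, mul_one]
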